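/- Let F be a complete discretely valued field, let g(T) ∈ O_F[T] be a separable monic Eisenstein polynomial with roots α_1, …, α_n in F^sep, let α be one of the roots, E = F(α), and d = v_E(g'(α)). Then for any π ∈ F^sep, v_E(g(π)) ≤ w + d, where w = max_{1 ≤ i ≤ n} v_E(π − α_i). -/

import Mathlib

open scoped LaurentSeries Multiplicative
noncomputable section

namespace FieldOfNormsPaper

abbrev Zm0 := WithZero (Multiplicative ℤ)
abbrev Qm0 := WithZero (Multiplicative ℚ)

def zToQ : Zm0 →*₀ Qm0 :=
  WithZero.map' (AddMonoidHom.toMultiplicative (Int.castAddHom ℚ))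

structure CDVF (F : Type) [Field F] where
  val : Valuation F Zm0
  isDiscrete : Function.Surjective val
  complete : @CompleteSpace F (Valued.mk' val).toUniformSpace

structure LocalFieldStr (k : Type) [Field k] (F : Type) [Field F] extends CDVF F where
  residIso : IsLocalRing.ResidueField val.valuationSubring ≃+* k

def LocalFieldStr.res {k F : Type} [Field k] [Field F] (S : LocalFieldStr k F)
    (x : F) (hx : S.val x ≤ 1) : k :=
  S.residIso (IsLocalRing.residue _ ⟨x, hx⟩)

def IsTotRam {F : Type} [Field F] (S : CDVF F) (L : Type) [Field L] [Algebra F L] : Prop :=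
  ∃ (g : Polynomial S.val.valuationSubring) (α : L),
    g.Monic ∧ g.IsEisensteinAt (IsLocalRing.maximalIdeal S.val.valuationSubring) ∧
    g.natDegree = Module.finrank F L ∧
    Polynomial.aeval α (g.map (algebraMap S.val.valuationSubring F)) = 0 ∧
    Algebra.adjoin F {α} = ⊤

structure AObj (p : ℕ) (k : Type) [Field k] where
  F : Type
  E : Type
  [fieldF : Field F]
  [fieldE : Field E]
  [alg : Algebra F E]
  base : LocalFieldStr k F
  valE : Valuation E Qm0
  val_comp : ∀ x : F, valE (algebraMap F E x) = zToQ (base.val x)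
  galois : IsGalois F E
  abelian : ∀ σ τ : E ≃ₐ[F] E, σ * τ = τ * σ
  totRam : ∀ L : IntermediateField F E, FiniteDimensional F L → IsTotRam base.toCDVF L
  infiniteIfCharZero : CharZero F → ¬ FiniteDimensional F E

attribute [instance] AObj.fieldF AObj.fieldE AObj.alg

abbrev K (k : Type) [Field k] := LaurentSeries k

variable (k : Type) [Field k]

def Tvar : K k := HahnSeries.single 1 1

def AutK : Subgroup ((K k) ≃ₐ[k] (K k)) where
  carrier := {σ | ∀ f : K k, Valued.v (σ f) = Valued.v f}
  one_mem' := fun _ => rfl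
  mul_mem' := by
    intro a b ha hb f
    have : (a * b) f = a (b f) := rfl
    rw [this, ha, hb]
  inv_mem' := by
    intro a ha f
    have : a (a⁻¹ f) = f := by
      have : a⁻¹ f = a.symm f := rfl
      rw [this]; exact a.apply_symm_apply f
    conv_rhs => rw [← this]
    rw [ha]

instance autKTop : TopologicalSpace (AutK k) :=
  TopologicalSpace.induced (fun σ => ((σ : (K k) ≃ₐ[k] (K k)) : K k → K k)) inferInstance

structure BObj where
  A : Subgroup (AutK k)
  abelian : ∀ σ τ : A, σ * τ = τ * σ
  closed : IsClosed (A : Set (AutK k))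

/-- `Sset` is a set of representatives for the cosets of `H'` in `H`. -/
def IsTransversal {G : Type} [Group G] (H H' : Subgroup G) (Sset : Finset G) : Prop :=
  (∀ s ∈ Sset, s ∈ H) ∧ ∀ τ ∈ H, ∃! s, s ∈ Sset ∧ s⁻¹ * τ ∈ H'

/-- `π` is a uniformizer of the subextension `L` with respect to the valuation `w`:
it has the largest value `< 1` among elements of `L`. -/
def IsUnifOf {F E : Type} [Field F] [Field E] [Algebra F E] (w : Valuation E Qm0)
    (L : IntermediateField F E) (π : E) : Prop :=
  π ∈ L ∧ w π ≠ 0 ∧ w π < 1 ∧ ∀ y ∈ L, w y < 1 → w y ≠ 0 → w y ≤ w π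

/-- An identification of the field of norms `X_F(E)` of a totally ramified abelian
extension `E/F` with `k((T))`.  An element `x` of `k((T))` corresponds to the
norm-compatible sequence `(comp x L)_L`, indexed by the finite subextensions `L` of
`E/F`; multiplication is componentwise, addition of integral elements is given by
the limit of the norms of the sums of the components, the distinguished uniformizer
`T` corresponds to a norm-compatible sequence of uniformizers, the Galois group acts
through `act`, and the residue field `k` is embedded via compatible `p`-power roots
of Teichmüller lifts. -/
structure NormField (k : Type) [Field k] (F E : Type) [Field F] [Field E] [Algebra F E]
    (S : LocalFieldStr k F) (w : Valuation E Qm0) where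
  /-- the component in `L` of an element of `k((T)) ≅ X_F(E)` -/
  comp : K k → IntermediateField F E → E
  comp_mem : ∀ x L, comp x L ∈ L
  comp_one : ∀ L, comp 1 L = 1
  comp_zero : ∀ L, comp 0 L = 0
  /-- multiplication is componentwise -/
  comp_mul : ∀ x y L, comp (x * y) L = comp x L * comp y L
  /-- the components form norm-compatible sequences:  the norm from `L'` to `L`
  (the product over a transversal of `Gal(E/L')` in `Gal(E/L)`) of the `L'`-component
  is the `L`-component -/
  comp_norm : ∀ (x : K k) (L L' : IntermediateField F E), L ≤ L' →
      FiniteDimensional F L' → ∀ Sset : Finset (E ≃ₐ[F] E),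
      IsTransversal L.fixingSubgroup L'.fixingSubgroup Sset →
      (∏ s ∈ Sset, s (comp x L')) = comp x L
  /-- an element of `X_F(E)` is determined by its components -/
  comp_inj : ∀ x y : K k, (∀ L : IntermediateField F E, FiniteDimensional F L → comp x L = comp y L) → x = y
  /-- every integral norm-compatible sequence arises from an element -/
  comp_surj : ∀ c : IntermediateField F E → E,
      (∀ L : IntermediateField F E, FiniteDimensional F L → c L ∈ L ∧ w (c L) ≤ 1) →
      (∀ (L L' : IntermediateField F E), L ≤ L' → FiniteDimensional F L' →
        ∀ Sset : Finset (E ≃ₐ[F] E),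
        IsTransversal L.fixingSubgroup L'.fixingSubgroup Sset →
        (∏ s ∈ Sset, s (c L')) = c L) →
      ∃ x : K k, Valued.v x ≤ (1 : Zm0) ∧ ∀ L : IntermediateField F E, FiniteDimensional F L → comp x L = c L
  /-- addition: the `L`-component of `x + y` is the limit over `L'` of the norms of
  the sums of the `L'`-components of `x` and `y` -/
  comp_add : ∀ x y : K k, Valued.v x ≤ (1 : Zm0) → Valued.v y ≤ (1 : Zm0) →
      ∀ L : IntermediateField F E, FiniteDimensional F L → ∀ N : ℕ,
      ∃ L₀ : IntermediateField F E, FiniteDimensional F L₀ ∧ L ≤ L₀ ∧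
        ∀ L' : IntermediateField F E, FiniteDimensional F L' → L₀ ≤ L' →
        ∀ Sset : Finset (E ≃ₐ[F] E),
        IsTransversal L.fixingSubgroup L'.fixingSubgroup Sset →
        w (comp (x + y) L - ∏ s ∈ Sset, s (comp x L' + comp y L'))
          ≤ (w (comp (Tvar k) L)) ^ N
  /-- the distinguished uniformizer `T` of `k((T))` corresponds to a compatible
  sequence of uniformizers of the finite subextensions -/
  unif : ∀ L : IntermediateField F E, FiniteDimensional F L → IsUnifOf w L (comp (Tvar k) L)
  /-- the action of `Gal(E/F)` on `X_F(E) ≅ k((T))` -/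
  act : (E ≃ₐ[F] E) →* AutK k
  /-- the action is induced by the action on the components -/
  act_compat : ∀ (σ : E ≃ₐ[F] E) (x : K k) (L : IntermediateField F E), FiniteDimensional F L →
      comp (((act σ : AutK k) : (K k) ≃ₐ[k] (K k)) x) L = σ (comp x L)
  act_inj : Function.Injective act
  act_range_closed : IsClosed ((act.range : Subgroup (AutK k)) : Set (AutK k))
  /-- the embedding of `k` in `X_F(E)` is by compatible `p`-power roots of
  Teichmüller lifts: the `L`-component of (the element corresponding to) `ζ ∈ k`,
  raised to the power `p^a` with `a = v_p([L:F])`, reduces to `ζ` in the residue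
  field -/
  teich : ∀ ζ : k, ∀ L : IntermediateField F E, FiniteDimensional F L → ∀ c : F, ∀ hc : S.val c ≤ 1,
      S.res c hc = ζ →
      w ((comp (algebraMap k (K k) ζ) L) ^
          ((ringChar k) ^ ((Module.finrank F L).factorization (ringChar k))) -
        algebraMap F E c) < 1

/-- The field-of-norms data attached to an object of `𝒜`. -/
abbrev ANorm {p : ℕ} {k : Type} [Field k] (a : AObj p k) : Type :=
  NormField k a.F a.E a.base a.valE

/-- The object `ℱ(E/F) = (X_F(E), Gal(E/F))` of `ℬ` attached to an object of `𝒜`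
with field-of-norms data. -/
def toBObj {p : ℕ} {k : Type} [Field k] (a : AObj p k) (n : ANorm a) : BObj k where
  A := n.act.range
  abelian := by
    rintro ⟨x, hx⟩ ⟨y, hy⟩
    obtain ⟨s, rfl⟩ := hx
    obtain ⟨t, rfl⟩ := hy
    refine Subtype.ext ?_
    show n.act s * n.act t = n.act t * n.act s
    rw [← map_mul, ← map_mul, a.abelian]
  closed := n.act_range_closed



/-- The lower ramification subgroup `Γ[x]` of `Γ = Aut_k(K)` for `x : ℝ`:
the set of `σ ∈ Aut_k(K)` with `v_K(σ(T) - T) ≥ x + 1`. -/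
def ramGroup (x : ℝ) : Subgroup (AutK k) where
  carrier := {σ | Valued.v (((σ : (K k) ≃ₐ[k] (K k)) (Tvar k)) - Tvar k)
      ≤ ((Multiplicative.ofAdd (-(⌈x⌉ + 1)) : Multiplicative ℤ) : Zm0)}
  one_mem' := by
    simp only [Set.mem_setOf_eq, OneMemClass.coe_one, AlgEquiv.one_apply, sub_self, map_zero]
    exact zero_le'
  mul_mem' := by
    intro a b ha hb
    simp only [Set.mem_setOf_eq] at *
    have hab : ((a * b : AutK k) : (K k) ≃ₐ[k] (K k)) (Tvar k)
        = (a : (K k) ≃ₐ[k] (K k)) ((b : (K k) ≃ₐ[k] (K k)) (Tvar k)) := rfl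
    rw [hab]
    have key : (a : (K k) ≃ₐ[k] (K k)) ((b : (K k) ≃ₐ[k] (K k)) (Tvar k)) - Tvar k
        = (a : (K k) ≃ₐ[k] (K k)) ((b : (K k) ≃ₐ[k] (K k)) (Tvar k) - Tvar k)
          + ((a : (K k) ≃ₐ[k] (K k)) (Tvar k) - Tvar k) := by
      rw [map_sub]; ring
    rw [key]
    refine le_trans (Valued.v.map_add _ _) (max_le ?_ ha)
    rw [a.2]; exact hb
  inv_mem' := by
    intro a ha
    simp only [Set.mem_setOf_eq] at *
    have h1 : (a : (K k) ≃ₐ[k] (K k)) ((a⁻¹ : AutK k).1 (Tvar k) - Tvar k)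
        = Tvar k - (a : (K k) ≃ₐ[k] (K k)) (Tvar k) := by
      rw [map_sub]
      congr 1
      exact (a : (K k) ≃ₐ[k] (K k)).apply_symm_apply (Tvar k)
    calc Valued.v ((a⁻¹ : AutK k).1 (Tvar k) - Tvar k)
        = Valued.v ((a : (K k) ≃ₐ[k] (K k)) ((a⁻¹ : AutK k).1 (Tvar k) - Tvar k)) := (a.2 _).symm
      _ = Valued.v (Tvar k - (a : (K k) ≃ₐ[k] (K k)) (Tvar k)) := by rw [h1]
      _ = Valued.v ((a : (K k) ≃ₐ[k] (K k)) (Tvar k) - Tvar k) := Valuation.map_sub_swap _ _ _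
      _ ≤ _ := ha

variable {k}

/-- A morphism of `ℬ` from `(K, A)` to `(K, A')` (where `K = k((T))`): a continuous
`k`-embedding `σ : K → K` such that `K` is finite separable over `σ(K)`, `A'`
stabilizes `σ(K)`, and the image of `A'` in `Aut_k(K)` is an open subgroup of `A`. -/
structure BMor (b b' : BObj k) where
  /-- the underlying continuous `k`-embedding -/
  σ : (K k) →ₐ[k] (K k)
  cont : Continuous σ
  /-- `K` is finite over `σ(K)` -/
  fin : (σ : (K k) →+* (K k)).Finite
  /-- `K` is separable over `σ(K)` -/
  sep : @Algebra.IsSeparable (K k) (K k) _ _ (σ : (K k) →+* (K k)).toAlgebra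
  /-- `A'` stabilizes `σ(K)` -/
  stab : ∀ γ : b'.A, ∀ x : K k, ∃ y : K k, ((γ : AutK k) : (K k) ≃ₐ[k] (K k)) (σ x) = σ y
  /-- the image of `A'` in `Aut_k(K)` is contained in `A` ... -/
  image_le : {τ : AutK k | ∃ γ ∈ b'.A, ∀ x : K k,
      ((γ : (K k) ≃ₐ[k] (K k)) (σ x)) = σ ((τ : (K k) ≃ₐ[k] (K k)) x)} ⊆ (b.A : Set (AutK k))
  /-- ... and is an open subgroup of `A` -/
  image_open : IsOpen (Subtype.val ⁻¹' {τ : AutK k | ∃ γ ∈ b'.A, ∀ x : K k,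
      ((γ : (K k) ≃ₐ[k] (K k)) (σ x)) = σ ((τ : (K k) ≃ₐ[k] (K k)) x)} : Set b.A)

/-- A morphism of `𝒜` from `E/F` to `E'/F'`: a continuous embedding `ρ : E → E'`
inducing the identity on the residue field `k`, mapping `F` into `F'`, such that
`E'/ρ(E)` and `F'/ρ(F)` are finite separable extensions. -/
structure AMor {p : ℕ} (a a' : AObj p k) where
  /-- the underlying embedding `E → E'` -/
  ρ : a.E →+* a'.E
  /-- the restriction `F → F'` of `ρ` to the base fields -/
  ρF : a.F →+* a'.F
  square : ∀ x : a.F, ρ (algebraMap a.F a.E x) = algebraMap a'.F a'.E (ρF x)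
  /-- `ρ` is continuous -/
  cont : @Continuous _ _ (Valued.mk' a.valE).toUniformSpace.toTopologicalSpace
      (Valued.mk' a'.valE).toUniformSpace.toTopologicalSpace ρ
  /-- `E'` is finite over `ρ(E)` -/
  finE : ρ.Finite
  /-- `E'` is separable over `ρ(E)` -/
  sepE : @Algebra.IsSeparable a.E a'.E _ _ ρ.toAlgebra
  /-- `F'` is finite over `ρ(F)` -/
  finF : ρF.Finite
  /-- `F'` is separable over `ρ(F)` -/
  sepF : @Algebra.IsSeparable a.F a'.F _ _ ρF.toAlgebra
  /-- `ρ` induces the identity on the residue field `k` -/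
  resk : ∀ x : a.F, ∀ hx : a.base.val x ≤ 1, ∃ hx' : a'.base.val (ρF x) ≤ 1,
      a'.base.res (ρF x) hx' = a.base.res x hx

/-- `s` is the `ℬ`-morphism induced by the `𝒜`-morphism `ρ` under the field of norms
functor, i.e. `s = ℱ(ρ)`:  for all sufficiently large finite subextensions `L` of
`E/F` there is a finite subextension `L'` of `E'/F'` with `ρ(L) ⊆ L'` such that the
`L'`-component of `s(x)` is `ρ` applied to the `L`-component of `x`. -/
def Induces {p : ℕ} {a a' : AObj p k} (na : ANorm a) (na' : ANorm a')
    (ρ : AMor a a') (s : BMor (toBObj a na) (toBObj a' na')) : Prop :=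
  ∃ M₀ : IntermediateField a.F a.E, FiniteDimensional a.F M₀ ∧
    ∀ L : IntermediateField a.F a.E, FiniteDimensional a.F L → M₀ ≤ L →
      ∃ L' : IntermediateField a'.F a'.E, FiniteDimensional a'.F L' ∧
        (∀ z ∈ L, ρ.ρ z ∈ L') ∧
        ∀ x : K k, na'.comp (s.σ x) L' = ρ.ρ (na.comp x L)

/-- Ramification filtrations (in the lower and upper numbering) on the Galois group
of an object `E/F` of `𝒜`.  The filtration is pinned down by the `anchor` axiom:
via Herbrand's theorem, the image of `G[x]` in the Galois group of a finite
subextension `L/F` is the concretely defined ramification subgroup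
`Gal(L/F)[φ_{E/L}(x)] = {σ : v_L(σ(π_L) - π_L) ≥ φ_{E/L}(x) + 1}`, where
`φ_{E/L}(x) = ∫_0^x dt / [Gal(E/L)[0] : Gal(E/L)[t]]`.  The upper numbering is
obtained from the lower numbering via the Hasse–Herbrand function
`φ_{E/F}(x) = ∫_0^x dt / [G[0] : G[t]]`, i.e. `G(φ_{E/F}(x)) = G[x]`. -/
structure LowerRamData {p : ℕ} (a : AObj p k) where
  /-- the ramification subgroups `G[x]` in the lower numbering -/
  low : ℝ → Subgroup (a.E ≃ₐ[a.F] a.E)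
  /-- `G[0] = G` (the extension is totally ramified) -/
  low_zero : low 0 = ⊤
  /-- the filtration is decreasing -/
  mono : ∀ x y : ℝ, 0 ≤ x → x ≤ y → low y ≤ low x
  /-- each `G[x]` has finite index (the extension is arithmetically profinite) -/
  finiteIndex : ∀ x : ℝ, (low x).index ≠ 0
  /-- Herbrand compatibility with the concrete filtration at finite levels -/
  anchor : ∀ L : IntermediateField a.F a.E, FiniteDimensional a.F L →
      ∀ x : ℝ, 0 ≤ x → ∀ σ : a.E ≃ₐ[a.F] a.E,
      (σ ∈ low x ⊔ L.fixingSubgroup ↔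
        ∀ π : a.E, IsUnifOf a.valE L π →
          a.valE (σ π - π) ≤ (a.valE π) ^
            (⌈∫ t in (0:ℝ)..x,
                (((L.fixingSubgroup ⊓ low t).relIndex L.fixingSubgroup : ℝ))⁻¹⌉ + 1))
  /-- the ramification subgroups `G(u)` in the upper numbering -/
  upr : ℝ → Subgroup (a.E ≃ₐ[a.F] a.E)
  /-- `G(φ_{E/F}(x)) = G[x]` -/
  upr_low : ∀ x : ℝ, 0 ≤ x →
      upr (∫ t in (0:ℝ)..x, (((low t).index : ℝ))⁻¹) = low x

/-- The subgroup `A` of `Aut_k(K)` is topologically finitely generated. -/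
def TopFG (b : BObj k) : Prop :=
  ∃ S : Finset (AutK k),
    (b.A : Set (AutK k)) ⊆ _root_.closure ((Subgroup.closure (S : Set (AutK k)) : Subgroup (AutK k)) : Set (AutK k))

end FieldOfNormsPaper

/-!
Take a root `β` of `g` closest to `π`. Since `g` is Eisenstein, hence irreducible, `α` and `β`
are conjugate over `F`; as `F` is complete, the extension `w` of its valuation is unique and
therefore Galois-invariant, so `w (g'(α)) = w (g'(β)) = ∏_{r ≠ β} w (β - r)`. Finally
`g(π) = (π - β) ∏_{r ≠ β} (π - r)`, and `w (β - r) ≤ w (π - r)` for every root `r` by the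
ultrametric inequality and the choice of `β`.
-/

open Polynomial
open scoped NNReal

theorem Valuation.map_sub_mul_map_aeval_derivative_le {R A Γ₀ : Type*} [CommRing R] [Field A]
    [Algebra R A] [LinearOrderedCommGroupWithZero Γ₀] (v : Valuation A Γ₀) {p : R[X]}
    (hp : (p.map (algebraMap R A)).Splits) (hmon : p.Monic) {β π : A} (hβ : β ∈ p.aroots A)
    (hmin : ∀ r ∈ p.aroots A, v (π - β) ≤ v (π - r)) :
    v (π - β) * v (aeval β (derivative p)) ≤ v (aeval π p) := by
  classical
  rw [aeval_def, ← eval_map, ← derivative_map, hp.eval_root_derivative (hmon.map _) hβ,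
    hp.aeval_eq_prod_aroots_of_monic hmon, ← Multiset.cons_erase hβ, Multiset.map_cons,
    Multiset.prod_cons, map_mul, map_multiset_prod, map_multiset_prod, Multiset.map_map,
    Multiset.map_map]
  gcongr
  refine Multiset.prod_map_le_prod_map₀ _ _ (fun _ _ => zero_le) fun r hr => ?_
  have hr' := hmin r (Multiset.mem_of_mem_erase hr)
  simpa using v.map_sub_le (le_refl (v (π - r))) hr'

theorem Polynomial.IsEisensteinAt.irreducible_map_fractionRing {R K : Type*} [CommRing R]
    [IsDomain R] [IsIntegrallyClosed R] [Field K] [Algebra R K] [IsFractionRing R K]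
    {P : Ideal R} [P.IsPrime] {g : R[X]} (heis : g.IsEisensteinAt P) (hmon : g.Monic)
    (hdeg : 0 < g.natDegree) : Irreducible (g.map (algebraMap R K)) :=
  hmon.irreducible_iff_irreducible_map_fraction_map.mp
    (heis.irreducible ‹_› hmon.isPrimitive hdeg)

namespace FieldOfNormsPaper

def twoPowUnits : Multiplicative ℚ →* ℝ≥0ˣ where
  toFun q := Units.mk0 ((2 : ℝ≥0) ^ (q.toAdd : ℝ)) (by positivity)
  map_one' := by ext; simp
  map_mul' a b := by ext; simp [NNReal.rpow_add two_ne_zero]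

def qm0ToNNReal : Qm0 →*₀ ℝ≥0 :=
  WithZero.withZeroUnitsEquiv.toMonoidWithZeroHom.comp (WithZero.map' twoPowUnits)

lemma qm0ToNNReal_strictMono : StrictMono qm0ToNNReal := by
  refine WithZero.withZeroUnitsEquiv_strictMono.comp (WithZero.map'_strictMono ?_)
  intro a b h
  simp only [twoPowUnits, MonoidHom.coe_mk, OneHom.coe_mk, ← Units.val_lt_val, Units.val_mk0]
  exact NNReal.rpow_lt_rpow_of_exponent_lt one_lt_two (by exact_mod_cast h)

lemma zToQ_strictMono : StrictMono zToQ :=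
  WithZero.map'_strictMono fun _ _ h => Int.cast_strictMono (R := ℚ) h

def qm0Abv {L : Type} [Field L] (v : Valuation L Qm0) : AbsoluteValue L ℝ where
  toFun x := qm0ToNNReal (v x)
  map_mul' x y := by simp
  nonneg' x := NNReal.coe_nonneg _
  eq_zero' x := by simp
  add_le' x y := by
    have h := qm0ToNNReal_strictMono.monotone (v.map_add x y)
    rw [qm0ToNNReal_strictMono.monotone.map_max] at h
    exact_mod_cast h.trans (max_le_add_of_nonneg (by positivity) (by positivity))

lemma qm0Abv_apply {L : Type} [Field L] (v : Valuation L Qm0) (x : L) :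
    qm0Abv v x = qm0ToNNReal (v x) := rfl

theorem CDVF.valuation_eq_of_extends {F L : Type} [Field F] [Field L] [Algebra F L]
    [Algebra.IsAlgebraic F L] (S : CDVF F) {v₁ v₂ : Valuation L Qm0}
    (h₁ : ∀ c : F, v₁ (algebraMap F L c) = zToQ (S.val c))
    (h₂ : ∀ c : F, v₂ (algebraMap F L c) = zToQ (S.val c)) : v₁ = v₂ := by
  let : Valued F Zm0 := Valued.mk' S.val
  obtain ⟨ϖ, hϖ⟩ := S.isDiscrete ((Multiplicative.ofAdd (-1 : ℤ) : Multiplicative ℤ) : Zm0)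
  let : Valuation.RankOne (Valued.v (R := F)) :=
    { hom' := (qm0ToNNReal.comp zToQ).comp MonoidWithZeroHom.ValueGroup₀.embedding
      strictMono' := (qm0ToNNReal_strictMono.comp zToQ_strictMono).comp
        MonoidWithZeroHom.ValueGroup₀.embedding_strictMono
      exists_val_nontrivial := ⟨ϖ, by
        change S.val ϖ ≠ 0 ∧ S.val ϖ ≠ 1
        rw [hϖ, ← WithZero.coe_one]
        exact ⟨WithZero.coe_ne_zero, WithZero.coe_injective.ne (by decide)⟩⟩ }
  let : NontriviallyNormedField F := Valued.toNontriviallyNormedField F Zm0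
  have : CompleteSpace F := S.complete
  have hext : ∀ v : Valuation L Qm0, (∀ c : F, v (algebraMap F L c) = zToQ (S.val c)) →
      ∀ c : F, qm0Abv v (algebraMap F L c) = ‖c‖ := fun v hv c => by
    rw [qm0Abv_apply, hv, Valued.toNormedField.norm_def]
    change _ = ((qm0ToNNReal.comp zToQ).comp MonoidWithZeroHom.ValueGroup₀.embedding
      (Valued.v.restrict c) : ℝ)
    rw [MonoidWithZeroHom.comp_apply, Valuation.embedding_restrict]
    rfl
  ext x
  apply qm0ToNNReal_strictMono.injective
  apply NNReal.coe_injective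
  rw [← qm0Abv_apply, ← qm0Abv_apply, spectralNorm_unique_field_norm_ext (hext v₁ h₁),
    spectralNorm_unique_field_norm_ext (hext v₂ h₂)]

theorem CDVF.valuation_algEquiv_apply {F L : Type} [Field F] [Field L] [Algebra F L]
    [Algebra.IsAlgebraic F L] (S : CDVF F) {w : Valuation L Qm0}
    (hw : ∀ c : F, w (algebraMap F L c) = zToQ (S.val c)) (σ : L ≃ₐ[F] L) (x : L) :
    w (σ x) = w x := by
  have hσ : ∀ c : F, w.comap (σ : L →+* L) (algebraMap F L c) = zToQ (S.val c) := fun c => by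
    simp [hw]
  exact congr($(S.valuation_eq_of_extends hσ hw) x)

theorem statement_13_general
    (F : Type) [Field F] (S : CDVF F)
    (w : Valuation (AlgebraicClosure F) Qm0)
    (hw : ∀ x : F, w (algebraMap F (AlgebraicClosure F) x) = zToQ (S.val x))
    (g : Polynomial S.val.valuationSubring) (hmon : g.Monic)
    (heis : g.IsEisensteinAt (IsLocalRing.maximalIdeal S.val.valuationSubring))
    (α : AlgebraicClosure F)
    (hα : Polynomial.aeval α (g.map (algebraMap S.val.valuationSubring F)) = 0)
    (π : AlgebraicClosure F) :
    ∃ β : AlgebraicClosure F,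
      Polynomial.aeval β (g.map (algebraMap S.val.valuationSubring F)) = 0 ∧
      (∀ β' : AlgebraicClosure F,
        Polynomial.aeval β' (g.map (algebraMap S.val.valuationSubring F)) = 0 →
        w (π - β) ≤ w (π - β')) ∧
      w (π - β) * w (Polynomial.aeval α
          (Polynomial.derivative (g.map (algebraMap S.val.valuationSubring F))))
        ≤ w (Polynomial.aeval π (g.map (algebraMap S.val.valuationSubring F))) := by
  classical
  set G := g.map (algebraMap S.val.valuationSubring F)
  have hGmon : G.Monic := hmon.map _
  have mem_aroots : ∀ x, aeval x G = 0 ↔ x ∈ G.aroots (AlgebraicClosure F) := fun x => by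
    rw [Polynomial.mem_aroots, and_iff_right hGmon.ne_zero]
  obtain ⟨β, hβ, hβmin⟩ := Finset.exists_min_image (G.aroots (AlgebraicClosure F)).toFinset
    (fun r => w (π - r)) ⟨α, Multiset.mem_toFinset.mpr ((mem_aroots α).mp hα)⟩
  rw [Multiset.mem_toFinset] at hβ
  simp only [Multiset.mem_toFinset] at hβmin
  refine ⟨β, (mem_aroots β).mpr hβ, fun β' hβ' => hβmin β' ((mem_aroots β').mp hβ'), ?_⟩
  have hGirr : Irreducible G := heis.irreducible_map_fractionRing hmon <|
    Nat.pos_of_ne_zero fun h => by simp [G, hmon.natDegree_eq_zero.mp h] at hα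
  have hminpoly : minpoly F β = G :=
    (minpoly.eq_of_irreducible_of_monic hGirr ((mem_aroots β).mpr hβ) hGmon).symm
  obtain ⟨σ, rfl⟩ := minpoly.exists_algEquiv_of_root' (Algebra.IsAlgebraic.isAlgebraic β)
    (hminpoly ▸ hα)
  rw [aeval_algHom_apply σ β, S.valuation_algEquiv_apply hw]
  exact w.map_sub_mul_map_aeval_derivative_le (IsAlgClosed.splits _) hGmon hβ hβmin

/-- Let `F` be a complete discretely valued field, `g ∈ O_F[T]` a separable monic
Eisenstein polynomial with roots `α_1, …, α_n` in the algebraic closure, `α` one of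
the roots (generating `E = F(α)`) and `d = v_E(g'(α))`.  Then for any `π`,
`v_E(g(π)) ≤ w + d`, where `w = max_i v_E(π - α_i)`.

Here the valuation `w` is the unique extension of the valuation of `F` to the
algebraic closure; additively the claim says that the root `β` closest to `π`
(i.e. maximizing `v_E(π - β)`, equivalently minimizing `w(π - β)`) satisfies
`v_E(g(π)) ≤ v_E(π - β) + d`, expressed multiplicatively as
`w(π - β) · w(g'(α)) ≤ w(g(π))`. -/
theorem statement_13
    (F : Type) [Field F] (S : CDVF F)
    (w : Valuation (AlgebraicClosure F) Qm0)
    (hw : ∀ x : F, w (algebraMap F (AlgebraicClosure F) x) = zToQ (S.val x))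
    (g : Polynomial S.val.valuationSubring) (hmon : g.Monic)
    (heis : g.IsEisensteinAt (IsLocalRing.maximalIdeal S.val.valuationSubring))
    (hsep : (g.map (algebraMap S.val.valuationSubring F)).Separable)
    (α : AlgebraicClosure F)
    (hα : Polynomial.aeval α (g.map (algebraMap S.val.valuationSubring F)) = 0)
    (π : AlgebraicClosure F) :
    ∃ β : AlgebraicClosure F,
      Polynomial.aeval β (g.map (algebraMap S.val.valuationSubring F)) = 0 ∧
      (∀ β' : AlgebraicClosure F,
        Polynomial.aeval β' (g.map (algebraMap S.val.valuationSubring F)) = 0 →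
        w (π - β) ≤ w (π - β')) ∧
      w (π - β) * w (Polynomial.aeval α
          (Polynomial.derivative (g.map (algebraMap S.val.valuationSubring F))))
        ≤ w (Polynomial.aeval π (g.map (algebraMap S.val.valuationSubring F))) :=
  statement_13_general F S w hw g hmon heis α hα π

end FieldOfNormsPaper
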